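/- Strassen's construction: the 2×2 matrix multiplication tensor ⟨2⟩ over any field has traditional rank at most 7. -/

import Mathlib

open scoped BigOperators

/-- The traditional rank of the `2 × 2` matrix multiplication tensor `⟨2⟩`, the trilinear form
`(A, B, C) ↦ ∑ i j ℓ, A i ℓ * B ℓ j * C j i = trace (A * B * C)`: the minimal `r` such that it
is a sum of `r` products of three linear forms. -/
noncomputable def trRankMM2 (F : Type*) [Field F] : ℕ :=
  sInf {r | ∃ f g h : Fin r → (Matrix (Fin 2) (Fin 2) F →ₗ[F] F),
    ∀ A B C : Matrix (Fin 2) (Fin 2) F,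
      ∑ i : Fin 2, ∑ j : Fin 2, ∑ l : Fin 2, A i l * B l j * C j i =
        ∑ t : Fin r, f t A * g t B * h t C}

/-! Strassen's seven products are `M₁ = (A₀₀ + A₁₁)(B₀₀ + B₁₁)`, `M₂ = (A₁₀ + A₁₁)B₀₀`,
`M₃ = A₀₀(B₀₁ - B₁₁)`, `M₄ = A₁₁(B₁₀ - B₀₀)`, `M₅ = (A₀₀ + A₀₁)B₁₁`, `M₆ = (A₁₀ - A₀₀)(B₀₀ + B₀₁)`,
`M₇ = (A₀₁ - A₁₁)(B₁₀ + B₁₁)`, and every entry of `A * B` is a `±1`-combination of them.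
Since `C j i` is paired with `(A * B) i j` in the trilinear form, the third factor of the
`k`-th term collects, with their signs, the entries `C j i` of those `(A * B) i j` that use `Mₖ`. -/

theorem strassen_identity {R : Type*} [CommRing R] (A B C : Matrix (Fin 2) (Fin 2) R) :
    ∑ i : Fin 2, ∑ j : Fin 2, ∑ l : Fin 2, A i l * B l j * C j i =
      (A 0 0 + A 1 1) * (B 0 0 + B 1 1) * (C 0 0 + C 1 1) +
      (A 1 0 + A 1 1) * B 0 0 * (C 0 1 - C 1 1) +
      A 0 0 * (B 0 1 - B 1 1) * (C 1 0 + C 1 1) +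
      A 1 1 * (B 1 0 - B 0 0) * (C 0 0 + C 0 1) +
      (A 0 0 + A 0 1) * B 1 1 * (C 1 0 - C 0 0) +
      (A 1 0 - A 0 0) * (B 0 0 + B 0 1) * C 1 1 +
      (A 0 1 - A 1 1) * (B 1 0 + B 1 1) * C 0 0 := by
  simp only [Fin.sum_univ_two]
  ring

/-- Strassen: over any field, the `2 × 2` matrix multiplication tensor has traditional rank at
most `7`. -/
theorem trRankMM2_le_seven (F : Type*) [Field F] : trRankMM2 F ≤ 7 := by
  let e : Fin 2 → Fin 2 → Matrix (Fin 2) (Fin 2) F →ₗ[F] F := Matrix.entryLinearMap F F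
  refine Nat.sInf_le ⟨![e 0 0 + e 1 1, e 1 0 + e 1 1, e 0 0, e 1 1, e 0 0 + e 0 1,
      e 1 0 - e 0 0, e 0 1 - e 1 1],
    ![e 0 0 + e 1 1, e 0 0, e 0 1 - e 1 1, e 1 0 - e 0 0, e 1 1, e 0 0 + e 0 1, e 1 0 + e 1 1],
    ![e 0 0 + e 1 1, e 0 1 - e 1 1, e 1 0 + e 1 1, e 0 0 + e 0 1, e 1 0 - e 0 0, e 1 1, e 0 0],
    fun A B C => ?_⟩
  rw [strassen_identity]
  simp [e, Fin.sum_univ_seven]
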